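/- Let R > 1 and let f be a holomorphic function on the annulus A(1/R,R) with |f(z)| < 1 for all z ∈ A(1/R,R), and suppose f(z₀) = 0 for some z₀ with |z₀| = 1. Then |f(z)| ≤ tanh(π²/(4 log R)) for every z with |z| = 1. -/

import Mathlib

/-! The map `ζ ↦ exp (i (2h/π) log ((1+ζ)/(1-ζ)))` sends the unit disk into the annulus
`A(e^{-h}, e^h)`: the Cayley map takes the disk to the right half-plane, `log` takes that to the
strip `|Im w| < π/2`, and `w ↦ exp (i (2h/π) w)` wraps the strip around the annulus. It sends `0`
to `1` and the real point `tanh (π δ / 4h)` to `e^{iδ}`, so the Schwarz lemma applied to `f`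
composed with (a rotation of) this map bounds `|f(z₀ e^{iδ})|` by `tanh (π |δ| / 4h)` whenever
`f(z₀) = 0`. For `h = log R` and `|δ| ≤ π` this is the claimed bound. -/

noncomputable section

/-- A real-valued function is harmonic on `Ω`: twice continuously differentiable
with vanishing Laplacian. -/
def HarmonicOnReal (u : ℂ → ℝ) (Ω : Set ℂ) : Prop :=
  ContDiffOn ℝ 2 u Ω ∧ ∀ z ∈ Ω,
    fderiv ℝ (fun w => fderiv ℝ u w 1) z 1 +
    fderiv ℝ (fun w => fderiv ℝ u w Complex.I) z Complex.I = 0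

/-- A complex-valued map is harmonic on `Ω` if its real and imaginary parts are. -/
def HarmonicMapOn (h : ℂ → ℂ) (Ω : Set ℂ) : Prop :=
  HarmonicOnReal (fun z => (h z).re) Ω ∧ HarmonicOnReal (fun z => (h z).im) Ω

/-- `h` is a harmonic homeomorphism from `Ω` onto `Ω'`. -/
def IsHarmonicHomeoOn (h : ℂ → ℂ) (Ω Ω' : Set ℂ) : Prop :=
  HarmonicMapOn h Ω ∧ ContinuousOn h Ω ∧ Set.BijOn h Ω Ω' ∧
  ∃ g : ℂ → ℂ, ContinuousOn g Ω' ∧ (∀ z ∈ Ω, g (h z) = z) ∧ (∀ w ∈ Ω', h (g w) = w)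

def Annulus (r R : ℝ) : Set ℂ := {z | r < ‖z‖ ∧ ‖z‖ < R}

/-- Wirtinger derivative `∂h/∂z = (h_x - i h_y)/2`. -/
def wirtingerZ (h : ℂ → ℂ) (z : ℂ) : ℂ :=
  (fderiv ℝ h z 1 - Complex.I * fderiv ℝ h z Complex.I) / 2

/-- Wirtinger derivative `∂h/∂z̄ = (h_x + i h_y)/2`. -/
def wirtingerZbar (h : ℂ → ℂ) (z : ℂ) : ℂ :=
  (fderiv ℝ h z 1 + Complex.I * fderiv ℝ h z Complex.I) / 2

/-- The Teichmüller ring `T(s) = ℂ \ ([-1,0] ∪ [s,∞))`. -/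
def Teich (s : ℝ) : Set ℂ := (Complex.ofReal '' (Set.Icc (-1) 0 ∪ Set.Ici s))ᶜ

namespace Real

theorem tanh_le_tanh {a b : ℝ} (hab : a ≤ b) : tanh a ≤ tanh b := by
  have mem (x : ℝ) : tanh x ∈ Set.Ioo (-1) 1 := ⟨neg_one_lt_tanh x, tanh_lt_one x⟩
  rwa [← artanh_le_artanh_iff (mem a) (mem b), artanh_tanh, artanh_tanh]

theorem tanh_nonneg {x : ℝ} (hx : 0 ≤ x) : 0 ≤ tanh x := by
  simpa using tanh_le_tanh hx

theorem abs_tanh (x : ℝ) : |tanh x| = tanh |x| := by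
  rcases le_total 0 x with hx | hx
  · rw [abs_of_nonneg hx, abs_of_nonneg (tanh_nonneg hx)]
  · rw [abs_of_nonpos hx, tanh_neg, abs_of_nonpos (by simpa using tanh_nonneg (neg_nonneg.2 hx))]

theorem log_one_add_tanh_div_one_sub_tanh (t : ℝ) :
    log ((1 + tanh t) / (1 - tanh t)) = 2 * t := by
  have h := artanh_eq_half_log ⟨(neg_one_lt_tanh t).le, (tanh_lt_one t).le⟩
  rw [artanh_tanh] at h
  linarith

end Real

namespace Complex

theorem one_sub_ne_zero_of_norm_lt_one {ζ : ℂ} (hζ : ‖ζ‖ < 1) : 1 - ζ ≠ 0 :=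
  fun h => by simp [← eq_of_sub_eq_zero h] at hζ

theorem re_one_add_div_one_sub_pos {ζ : ℂ} (hζ : ‖ζ‖ < 1) : 0 < ((1 + ζ) / (1 - ζ)).re := by
  have hne := one_sub_ne_zero_of_norm_lt_one hζ
  have hsq : normSq ζ < 1 := by
    rw [normSq_eq_norm_sq]; nlinarith [norm_nonneg ζ]
  have hre : ((1 + ζ) / (1 - ζ)).re = (1 - normSq ζ) / normSq (1 - ζ) := by
    rw [div_re, ← add_div]
    congr 1
    simp only [add_re, sub_re, add_im, sub_im, one_re, one_im, normSq_apply]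
    ring
  rw [hre]
  exact div_pos (by linarith) (normSq_pos.2 hne)

end Complex

open Complex in
def diskToAnnulus (h : ℝ) (ζ : ℂ) : ℂ :=
  exp (I * ((2 * h / Real.pi : ℝ) * log ((1 + ζ) / (1 - ζ))))

section diskToAnnulus

open Complex

variable {h : ℝ}

theorem norm_diskToAnnulus (ζ : ℂ) :
    ‖diskToAnnulus h ζ‖ = Real.exp (-(2 * h / Real.pi * ((1 + ζ) / (1 - ζ)).arg)) := by
  simp [diskToAnnulus, norm_exp, log_im]

theorem diskToAnnulus_mem_annulus (hh : 0 < h) {ζ : ℂ} (hζ : ‖ζ‖ < 1) :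
    diskToAnnulus h ζ ∈ Annulus (Real.exp (-h)) (Real.exp h) := by
  have harg := abs_lt.1 <|
    abs_arg_lt_pi_div_two_iff.2 (Or.inl (re_one_add_div_one_sub_pos hζ))
  have hscale : 2 * h / Real.pi * (Real.pi / 2) = h := by field_simp
  have hc : 0 < 2 * h / Real.pi := by positivity
  constructor <;> rw [norm_diskToAnnulus] <;> refine Real.exp_lt_exp.2 ?_ <;> nlinarith

theorem differentiableAt_diskToAnnulus {ζ : ℂ} (hζ : ‖ζ‖ < 1) :
    DifferentiableAt ℂ (diskToAnnulus h) ζ := by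
  have hne := one_sub_ne_zero_of_norm_lt_one hζ
  have hslit : (1 + ζ) / (1 - ζ) ∈ slitPlane := Or.inl (re_one_add_div_one_sub_pos hζ)
  unfold diskToAnnulus
  fun_prop (disch := assumption)

theorem diskToAnnulus_zero : diskToAnnulus h 0 = 1 := by
  simp [diskToAnnulus]

theorem diskToAnnulus_tanh (hh : h ≠ 0) (δ : ℝ) :
    diskToAnnulus h (Real.tanh (Real.pi * δ / (4 * h))) = exp (δ * I) := by
  set s := Real.tanh (Real.pi * δ / (4 * h)) with hs
  have hpos : 0 < (1 + s) / (1 - s) := by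
    have := Real.abs_tanh_lt_one (Real.pi * δ / (4 * h))
    rw [abs_lt] at this
    exact div_pos (by linarith) (by linarith)
  have hquot : (1 + (s : ℂ)) / (1 - s) = ((1 + s) / (1 - s) : ℝ) := by push_cast; rfl
  rw [diskToAnnulus, hquot, ← ofReal_log hpos.le, hs, Real.log_one_add_tanh_div_one_sub_tanh]
  have hh' : (h : ℂ) ≠ 0 := ofReal_ne_zero.2 hh
  have hπ : (Real.pi : ℂ) ≠ 0 := ofReal_ne_zero.2 Real.pi_ne_zero
  congr 1
  push_cast
  field_simp
  ring

end diskToAnnulus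

open Complex Metric in
theorem norm_apply_mul_exp_le_tanh {h : ℝ} (hh : 0 < h) {f : ℂ → ℂ}
    (hf : DifferentiableOn ℂ f (Annulus (Real.exp (-h)) (Real.exp h)))
    (hb : ∀ z ∈ Annulus (Real.exp (-h)) (Real.exp h), ‖f z‖ < 1)
    {z₀ : ℂ} (hz₀ : ‖z₀‖ = 1) (hf0 : f z₀ = 0) (δ : ℝ) :
    ‖f (z₀ * exp (δ * I))‖ ≤ Real.tanh (Real.pi * |δ| / (4 * h)) := by
  have hmem : Set.MapsTo (fun ζ => z₀ * diskToAnnulus h ζ) (ball 0 1)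
      (Annulus (Real.exp (-h)) (Real.exp h)) := fun ζ hζ => by
    simpa only [Annulus, Set.mem_ofPred_eq, norm_mul, hz₀, one_mul] using
      diskToAnnulus_mem_annulus hh (mem_ball_zero_iff.1 hζ)
  have hdiff : DifferentiableOn ℂ (fun ζ => f (z₀ * diskToAnnulus h ζ)) (ball 0 1) :=
    hf.comp (fun ζ hζ => ((differentiableAt_diskToAnnulus
      (mem_ball_zero_iff.1 hζ)).const_mul z₀).differentiableWithinAt) hmem
  have hmaps : Set.MapsTo (fun ζ => f (z₀ * diskToAnnulus h ζ)) (ball 0 1) (closedBall 0 1) :=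
    fun ζ hζ => mem_closedBall_zero_iff.2 (hb _ (hmem hζ)).le
  have hζ : ‖(Real.tanh (Real.pi * δ / (4 * h)) : ℂ)‖ < 1 := by
    rw [norm_real, Real.norm_eq_abs]
    exact Real.abs_tanh_lt_one _
  have hschwarz := norm_le_norm_of_mapsTo_ball hdiff hmaps
    (by simp [diskToAnnulus_zero, hf0]) hζ
  rwa [diskToAnnulus_tanh hh.ne', norm_real, Real.norm_eq_abs, Real.abs_tanh, abs_div,
    abs_mul, abs_of_pos Real.pi_pos, abs_of_pos (by positivity : 0 < 4 * h)] at hschwarz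

/-- Schwarz-type estimate on the unit circle for holomorphic functions on
`A(1/R,R)` vanishing at some point of the unit circle. -/
theorem stmt3 (R : ℝ) (hR : 1 < R) (f : ℂ → ℂ)
    (hf : DifferentiableOn ℂ f (Annulus (1/R) R))
    (hb : ∀ z ∈ Annulus (1/R) R, ‖f z‖ < 1)
    (z₀ : ℂ) (hz₀ : ‖z₀‖ = 1) (hf0 : f z₀ = 0)
    (z : ℂ) (hz : ‖z‖ = 1) :
    ‖f z‖ ≤ Real.tanh (Real.pi ^ 2 / (4 * Real.log R)) := by
  have hlog : 0 < Real.log R := Real.log_pos hR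
  have hannulus : Annulus (1/R) R = Annulus (Real.exp (-Real.log R)) (Real.exp (Real.log R)) := by
    rw [Real.exp_neg, Real.exp_log (by linarith), one_div]
  have hz_eq : z = z₀ * Complex.exp ((z / z₀).arg * Complex.I) := by
    have hz₀' : z₀ ≠ 0 := norm_ne_zero_iff.1 (by simp [hz₀])
    have hnorm : ‖z / z₀‖ = 1 := by rw [norm_div, hz, hz₀, div_one]
    rw [← one_mul (Complex.exp _), ← Complex.ofReal_one, ← hnorm,
      Complex.norm_mul_exp_arg_mul_I, mul_div_cancel₀ _ hz₀']
  rw [hannulus] at hf hb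
  rw [hz_eq]
  refine (norm_apply_mul_exp_le_tanh hlog hf hb hz₀ hf0 _).trans (Real.tanh_le_tanh ?_)
  have hδ := Complex.abs_arg_le_pi (z / z₀)
  rw [div_le_div_iff_of_pos_right (by positivity), sq]
  exact mul_le_mul_of_nonneg_left hδ Real.pi_pos.le
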